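/- arXiv:2004.13233 — 4 statements merged into one kernel-verified Lean document; each statement's English description precedes it below -/
import Mathlib

section
/- Let λ ∈ (0,1) and let (γ_k)_{k≥0} be a sequence of positive reals with γ_k → 0, ∑_k γ_k = ∞, and lim_{k→∞} γ_{k+1}/γ_k = 1. Then ∑_{k=0}^{T-1} λ^k γ_{T-k-1} = O(γ_{T-1}/(1-λ)) as T → ∞; more precisely, there is a constant C and T_0 such that for all T ≥ T_0, ∑_{k=0}^{T-1} λ^k γ_{T-k-1} ≤ C γ_{T-1}/(1-λ). -/
open Finset Filter

lemma geom_aux {r : ℝ} (h0 : 0 ≤ r) (h1 : r < 1) (n : ℕ) :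
    ∑ k ∈ Finset.range n, r ^ k ≤ 1 / (1 - r) := by
  rw [le_div_iff₀ (by linarith)]
  nlinarith [geom_sum_mul r n, pow_nonneg h0 n]

/-- The geometric convolution of a slowly-varying vanishing non-summable positive sequence is
of the same order as `γ (T-1) / (1 - λ)`. -/
theorem geometric_convolution_big_O (lam : ℝ) (hlam : lam ∈ Set.Ioo (0 : ℝ) 1)
    (γ : ℕ → ℝ) (hpos : ∀ k, 0 < γ k)
    (hlim : Tendsto γ atTop (nhds 0))
    (hdiv : Tendsto (fun T => ∑ k ∈ Finset.range T, γ k) atTop atTop)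
    (hratio : Tendsto (fun k => γ (k + 1) / γ k) atTop (nhds 1)) :
    ∃ C > 0, ∃ T₀ : ℕ, ∀ T ≥ T₀,
      ∑ k ∈ Finset.range T, lam ^ k * γ (T - k - 1) ≤ C * γ (T - 1) / (1 - lam) := by
  obtain ⟨hl0, hl1⟩ := hlam
  obtain ⟨ρ, hρ1, hlρ1⟩ : ∃ ρ : ℝ, 1 < ρ ∧ lam * ρ < 1 := by
    refine ⟨(1 + lam) / (2 * lam), ?_, ?_⟩
    · rw [lt_div_iff₀ (by linarith)]; linarith
    · rw [mul_div_assoc', div_lt_one (by linarith)]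
      nlinarith
  have hρ0 : 0 < ρ := by linarith
  have hlρ0 : 0 < lam * ρ := mul_pos hl0 hρ0
  have hone : (0:ℝ) < 1 - lam * ρ := by linarith
  -- inverse ratio tends to 1
  have hinv : Tendsto (fun k => γ k / γ (k + 1)) atTop (nhds 1) := by
    have h := hratio.inv₀ one_ne_zero
    simp only [inv_one] at h
    refine h.congr (fun k => ?_)
    rw [inv_div]
  obtain ⟨N, hN⟩ := eventually_atTop.1 (hinv.eventually (eventually_le_nhds hρ1))
  have hstep : ∀ k, N ≤ k → γ k ≤ ρ * γ (k + 1) := by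
    intro k hk
    have h := hN k hk
    rw [div_le_iff₀ (hpos _)] at h
    linarith [h]
  have key : ∀ m, N ≤ m → ∀ i, γ m ≤ ρ ^ i * γ (m + i) := by
    intro m hm i
    induction i with
    | zero => simp
    | succ i ih =>
      calc γ m ≤ ρ ^ i * γ (m + i) := ih
        _ ≤ ρ ^ i * (ρ * γ (m + i + 1)) := by
            have h := hstep (m + i) (by omega)
            have h0 : (0:ℝ) ≤ ρ ^ i := by positivity
            nlinarith
        _ = ρ ^ (i + 1) * γ (m + (i + 1)) := by rw [pow_succ, ← add_assoc]; ring
  obtain ⟨B, hB, hγB⟩ : ∃ B : ℝ, 0 < B ∧ ∀ j, j ≤ N → γ j ≤ B :=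
    ⟨∑ j ∈ Finset.range (N + 1), γ j,
      Finset.sum_pos (fun i _ => hpos i) (by simp),
      fun j hj => Finset.single_le_sum (fun i _ => (hpos i).le)
        (Finset.mem_range.2 (Nat.lt_succ_of_le hj))⟩
  have hK : (0:ℝ) ≤ (N : ℝ) * B * lam := by positivity
  obtain ⟨ε, hε, hεle⟩ : ∃ ε : ℝ, 0 < ε ∧ (N : ℝ) * B * lam * ε ≤ γ N := by
    refine ⟨γ N / ((N : ℝ) * B * lam + 1), div_pos (hpos N) (by linarith), ?_⟩
    calc (N : ℝ) * B * lam * (γ N / ((N : ℝ) * B * lam + 1))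
        = (N : ℝ) * B * lam * γ N / ((N : ℝ) * B * lam + 1) := by rw [mul_div_assoc]
      _ ≤ ((N : ℝ) * B * lam + 1) * γ N / ((N : ℝ) * B * lam + 1) := by
          gcongr
          · linarith [hpos N]
          · linarith
      _ = γ N := mul_div_cancel_left₀ _ (by linarith)
  have hpow : Tendsto (fun s : ℕ => (lam * ρ) ^ s) atTop (nhds 0) :=
    tendsto_pow_atTop_nhds_zero_of_lt_one hlρ0.le hlρ1
  obtain ⟨M, hM⟩ := eventually_atTop.1 (hpow.eventually (eventually_le_nhds hε))
  have hCpos : 0 < (1 - lam) * (1 / (1 - lam * ρ) + 1) := by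
    have h1 : 0 < 1 / (1 - lam * ρ) := by positivity
    nlinarith
  refine ⟨(1 - lam) * (1 / (1 - lam * ρ) + 1), hCpos, max (N + 1) (M + N + 1), ?_⟩
  intro T hT
  have hT1 : N + 1 ≤ T := le_trans (le_max_left _ _) hT
  have hT2 : M + N + 1 ≤ T := le_trans (le_max_right _ _) hT
  obtain ⟨s, rfl⟩ : ∃ s, T = s + N + 1 := ⟨T - N - 1, by omega⟩
  have hsM : M ≤ s := by omega
  have hTm : s + N + 1 - 1 = s + N := by omega
  rw [hTm]
  have hlamne : (1:ℝ) - lam ≠ 0 := by linarith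
  have hlρne : (1:ℝ) - lam * ρ ≠ 0 := ne_of_gt hone
  have hRHS : (1 - lam) * (1 / (1 - lam * ρ) + 1) * γ (s + N) / (1 - lam)
      = (1 / (1 - lam * ρ)) * γ (s + N) + γ (s + N) := by
    field_simp
  rw [hRHS]
  have hterm : ∀ k ∈ Finset.range (s + N + 1),
      lam ^ k * γ (s + N + 1 - k - 1) ≤
        (lam * ρ) ^ k * γ (s + N) + (if k ≤ s then 0 else lam ^ (s + 1) * B) := by
    intro k hk
    rw [Finset.mem_range] at hk
    have hidx : s + N + 1 - k - 1 = s + N - k := by omega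
    rw [hidx]
    by_cases hks : k ≤ s
    · rw [if_pos hks]
      have h1 := key (s + N - k) (by omega) k
      rw [show s + N - k + k = s + N from by omega] at h1
      have h2 : (0:ℝ) ≤ lam ^ k := by positivity
      calc lam ^ k * γ (s + N - k) ≤ lam ^ k * (ρ ^ k * γ (s + N)) := by nlinarith
        _ = (lam * ρ) ^ k * γ (s + N) + 0 := by rw [mul_pow]; ring
    · rw [if_neg hks]
      have h1 : γ (s + N - k) ≤ B := hγB _ (by omega)
      have h2 : lam ^ k ≤ lam ^ (s + 1) := pow_le_pow_of_le_one hl0.le hl1.le (by omega)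
      have h3 : (0:ℝ) ≤ (lam * ρ) ^ k * γ (s + N) :=
        mul_nonneg (by positivity) (hpos _).le
      have h4 : lam ^ k * γ (s + N - k) ≤ lam ^ (s + 1) * B := by
        have h5 := (hpos (s + N - k)).le
        have h6 : (0:ℝ) ≤ lam ^ k := by positivity
        nlinarith
      linarith
  have hsum1 : ∑ k ∈ Finset.range (s + N + 1), lam ^ k * γ (s + N + 1 - k - 1) ≤
      (∑ k ∈ Finset.range (s + N + 1), (lam * ρ) ^ k) * γ (s + N)
        + ∑ k ∈ Finset.range (s + N + 1), (if k ≤ s then 0 else lam ^ (s + 1) * B) := by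
    rw [Finset.sum_mul, ← Finset.sum_add_distrib]
    exact Finset.sum_le_sum hterm
  have hsplit : ∑ k ∈ Finset.range (s + N + 1),
      (if k ≤ s then (0:ℝ) else lam ^ (s + 1) * B) = N * (lam ^ (s + 1) * B) := by
    rw [Finset.range_eq_Ico, ← Finset.sum_Ico_consecutive _ (Nat.zero_le (s + 1)) (by omega)]
    have h1 : ∑ k ∈ Finset.Ico 0 (s + 1), (if k ≤ s then (0:ℝ) else lam ^ (s + 1) * B) = 0 :=
      Finset.sum_eq_zero (fun k hk => by
        rw [Finset.mem_Ico] at hk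
        exact if_pos (by omega))
    have h2 : ∑ k ∈ Finset.Ico (s + 1) (s + N + 1),
        (if k ≤ s then (0:ℝ) else lam ^ (s + 1) * B) = N * (lam ^ (s + 1) * B) := by
      have he : ∀ k ∈ Finset.Ico (s + 1) (s + N + 1),
          (if k ≤ s then (0:ℝ) else lam ^ (s + 1) * B) = lam ^ (s + 1) * B :=
        fun k hk => if_neg (by rw [Finset.mem_Ico] at hk; omega)
      rw [Finset.sum_congr rfl he, Finset.sum_const, Nat.card_Ico, nsmul_eq_mul,
        show s + N + 1 - (s + 1) = N from by omega]
    rw [h1, h2, zero_add]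
  -- bound N * (lam^(s+1) * B) ≤ γ (s + N)
  have hkey2 : γ N ≤ ρ ^ s * γ (s + N) := by
    have h := key N le_rfl s
    rwa [add_comm N s] at h
  have hεs : (lam * ρ) ^ s ≤ ε := hM s hsM
  have hNc : (N : ℝ) * (lam ^ (s + 1) * B) ≤ γ (s + N) := by
    have hρs : (0:ℝ) < ρ ^ s := by positivity
    have e3 : (N : ℝ) * B * lam * ((lam * ρ) ^ s) ≤ γ N :=
      le_trans (mul_le_mul_of_nonneg_left hεs hK) hεle
    have e4 : (N : ℝ) * (lam ^ (s + 1) * B) * ρ ^ s ≤ γ (s + N) * ρ ^ s := by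
      calc (N : ℝ) * (lam ^ (s + 1) * B) * ρ ^ s
          = (N : ℝ) * B * lam * ((lam * ρ) ^ s) := by rw [mul_pow, pow_succ]; ring
        _ ≤ γ N := e3
        _ ≤ ρ ^ s * γ (s + N) := hkey2
        _ = γ (s + N) * ρ ^ s := by ring
    exact le_of_mul_le_mul_right e4 hρs
  have hgeo : ∑ k ∈ Finset.range (s + N + 1), (lam * ρ) ^ k ≤ 1 / (1 - lam * ρ) :=
    geom_aux hlρ0.le hlρ1 _
  have hγpos : (0:ℝ) < γ (s + N) := hpos _
  calc ∑ k ∈ Finset.range (s + N + 1), lam ^ k * γ (s + N + 1 - k - 1)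
      ≤ (∑ k ∈ Finset.range (s + N + 1), (lam * ρ) ^ k) * γ (s + N)
          + N * (lam ^ (s + 1) * B) := by
        rw [← hsplit]; exact hsum1
    _ ≤ (1 / (1 - lam * ρ)) * γ (s + N) + γ (s + N) := by
        have h8 := mul_le_mul_of_nonneg_right hgeo hγpos.le
        linarith
end

section
/- Let λ ∈ (0,1), let (γ_k) be positive with γ_k → 0, and bounded by M. For each T set K_0(T) = ⌈ log γ_{T-1} / log λ ⌉. Then ∑_{k=0}^{T-1} λ^k γ_{T-k-1} ≤ (1/(1-λ)) ( max_{0 ≤ k ≤ K_0(T)-1} γ_{T-k-1} + M γ_{T-1} ). -/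
open Finset Filter

/-- Splitting bound for the geometric convolution: with
`K₀(T) = ⌈log γ (T-1) / log λ⌉`, the convolution is bounded by
`(1/(1-λ)) (max_{0 ≤ k ≤ K₀(T)-1} γ (T-k-1) + M γ (T-1))`. -/
theorem geometric_convolution_split (lam M : ℝ) (hlam : lam ∈ Set.Ioo (0 : ℝ) 1)
    (γ : ℕ → ℝ) (hpos : ∀ k, 0 < γ k) (hM : ∀ k, γ k ≤ M)
    (hlim : Tendsto γ atTop (nhds 0)) (T : ℕ) (hT : 1 ≤ T) :
    ∑ k ∈ Finset.range T, lam ^ k * γ (T - k - 1)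
      ≤ (1 / (1 - lam)) *
        (sSup ((fun k => γ (T - k - 1)) ''
          (Set.Iio (⌈Real.log (γ (T - 1)) / Real.log lam⌉.toNat))) + M * γ (T - 1)) := by
  obtain ⟨hl0, hl1⟩ := hlam
  have h1l : 0 < 1 - lam := by linarith
  set K : ℕ := (⌈Real.log (γ (T - 1)) / Real.log lam⌉).toNat with hKdef
  set Γ : ℝ := sSup ((fun k => γ (T - k - 1)) '' (Set.Iio K)) with hΓ
  have hfin : ((fun k => γ (T - k - 1)) '' (Set.Iio K)).Finite :=
    (Set.finite_Iio K).image _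
  have hbdd : BddAbove ((fun k => γ (T - k - 1)) '' (Set.Iio K)) := hfin.bddAbove
  have hmem : ∀ k < K, γ (T - k - 1) ≤ Γ := fun k hk =>
    le_csSup hbdd ⟨k, hk, rfl⟩
  have hΓ0 : 0 ≤ Γ := by
    rcases Nat.eq_zero_or_pos K with h | h
    · rw [hΓ, h]
      rw [show Set.Iio (0:ℕ) = (∅ : Set ℕ) from by ext x; simp, Set.image_empty,
        Real.sSup_empty]
    · exact le_trans (hpos (T - 0 - 1)).le (hmem 0 h)
  have hlog : Real.log lam < 0 := Real.log_neg hl0 hl1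
  -- λ^k ≤ γ (T-1) for k ≥ K
  have hpow : ∀ k : ℕ, K ≤ k → lam ^ k ≤ γ (T - 1) := by
    intro k hk
    have hk' : Real.log (γ (T - 1)) / Real.log lam ≤ (k : ℝ) := by
      calc Real.log (γ (T - 1)) / Real.log lam ≤ (⌈Real.log (γ (T - 1)) / Real.log lam⌉ : ℝ) :=
            Int.le_ceil _
        _ ≤ ((⌈Real.log (γ (T - 1)) / Real.log lam⌉.toNat : ℤ) : ℝ) := by
            exact_mod_cast Int.self_le_toNat _
        _ ≤ (k : ℝ) := by exact_mod_cast hk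
    have : (k : ℝ) * Real.log lam ≤ Real.log (γ (T - 1)) := by
      rw [div_le_iff_of_neg hlog] at hk'
      linarith
    have hlogpow : Real.log (lam ^ k) ≤ Real.log (γ (T - 1)) := by
      rwa [Real.log_pow]
    exact (Real.log_le_log_iff (pow_pos hl0 k) (hpos _)).mp hlogpow
  -- geometric sum bound
  have hgeom : ∀ n : ℕ, ∑ j ∈ range n, lam ^ j ≤ 1 / (1 - lam) := by
    intro n
    rw [geom_sum_eq (by linarith : lam ≠ 1)]
    have h2 : (lam ^ n - 1) / (lam - 1) = (1 - lam ^ n) / (1 - lam) := by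
      rw [← neg_div_neg_eq]; ring_nf
    rw [h2, div_le_div_iff₀ h1l h1l]
    have : 0 ≤ lam ^ n := pow_nonneg hl0.le n
    nlinarith
  -- split the sum
  rw [← Finset.sum_filter_add_sum_filter_not (range T) (· < K)]
  have hA : ∑ k ∈ (range T).filter (· < K), lam ^ k * γ (T - k - 1)
      ≤ Γ * (1 / (1 - lam)) := by
    calc ∑ k ∈ (range T).filter (· < K), lam ^ k * γ (T - k - 1)
        ≤ ∑ k ∈ (range T).filter (· < K), lam ^ k * Γ := by
          apply Finset.sum_le_sum
          intro k hk
          simp only [Finset.mem_filter] at hk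
          exact mul_le_mul_of_nonneg_left (hmem k hk.2) (pow_nonneg hl0.le k)
      _ = (∑ k ∈ (range T).filter (· < K), lam ^ k) * Γ := by rw [Finset.sum_mul]
      _ ≤ (∑ k ∈ range T, lam ^ k) * Γ := by
          apply mul_le_mul_of_nonneg_right _ hΓ0
          exact Finset.sum_le_sum_of_subset_of_nonneg (Finset.filter_subset _ _)
            (fun i _ _ => pow_nonneg hl0.le i)
      _ ≤ (1 / (1 - lam)) * Γ := mul_le_mul_of_nonneg_right (hgeom T) hΓ0
      _ = Γ * (1 / (1 - lam)) := mul_comm _ _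
  have hB : ∑ k ∈ (range T).filter (fun k => ¬ k < K), lam ^ k * γ (T - k - 1)
      ≤ M * γ (T - 1) * (1 / (1 - lam)) := by
    have hM0 : 0 < M := lt_of_lt_of_le (hpos 0) (hM 0)
    have hfilter : (range T).filter (fun k => ¬ k < K) = Finset.Ico K T := by
      ext k; simp [Finset.mem_filter, Finset.mem_Ico, Nat.not_lt, and_comm]
    rw [hfilter]
    calc ∑ k ∈ Finset.Ico K T, lam ^ k * γ (T - k - 1)
        ≤ ∑ k ∈ Finset.Ico K T, lam ^ k * M := by
          apply Finset.sum_le_sum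
          intro k _
          exact mul_le_mul_of_nonneg_left (hM _) (pow_nonneg hl0.le k)
      _ = M * ∑ k ∈ Finset.Ico K T, lam ^ k := by rw [← Finset.sum_mul, mul_comm]
      _ = M * ∑ j ∈ range (T - K), lam ^ (K + j) := by
          rw [Finset.sum_Ico_eq_sum_range]
      _ = M * (lam ^ K * ∑ j ∈ range (T - K), lam ^ j) := by
          simp only [Finset.mul_sum, pow_add, mul_assoc]
      _ ≤ M * (γ (T - 1) * (1 / (1 - lam))) := by
          apply mul_le_mul_of_nonneg_left _ hM0.le
          apply mul_le_mul (hpow K le_rfl) (hgeom _) _ (hpos _).le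
          exact Finset.sum_nonneg fun i _ => pow_nonneg hl0.le i
      _ = M * γ (T - 1) * (1 / (1 - lam)) := by ring
  calc _ ≤ Γ * (1 / (1 - lam)) + M * γ (T - 1) * (1 / (1 - lam)) := add_le_add hA hB
    _ = (1 / (1 - lam)) * (Γ + M * γ (T - 1)) := by ring
end

section
/- Let N ≥ 1, a > 0, 0 < 2b ≤ a, c ≥ 1. Consider minimizing F(x) = -(1/2) ∑_{i=1}^N (x_i^2 - 2 b x_i) over x ∈ R^N subject to ∑_{i=1}^N x_i^2 ≤ N a^2 and 0 ≤ x_i ≤ c a for all i. Then the minimum value is at least -(1/2) N a^2 + N b a / c. -/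
open Finset

/-- Lower bound on the constrained concave quadratic minimization problem (P_N). -/
theorem concave_quadratic_lower_bound (N : ℕ) (hN : 1 ≤ N) (a b c : ℝ)
    (ha : 0 < a) (hb : 0 < b) (h2b : 2 * b ≤ a) (hc : 1 ≤ c)
    (x : Fin N → ℝ)
    (hball : ∑ i, (x i) ^ 2 ≤ N * a ^ 2)
    (hbox : ∀ i, 0 ≤ x i ∧ x i ≤ c * a) :
    -(1 / 2) * ∑ i, ((x i) ^ 2 - 2 * b * x i) ≥ -(1 / 2) * N * a ^ 2 + N * b * a / c := by
  have hca : 0 < c * a := by positivity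
  have hdiv : b / (c * a) ≤ 1 / 2 := by
    rw [div_le_iff₀ hca]
    nlinarith
  set lam : ℝ := 1 / 2 - b / (c * a) with hlam
  have hlam0 : 0 ≤ lam := by rw [hlam]; linarith
  have key : ∀ i ∈ Finset.univ, -lam * (x i) ^ 2 ≤ -(1 / 2) * ((x i) ^ 2 - 2 * b * x i) := by
    intro i _
    obtain ⟨h0, h1⟩ := hbox i
    have h2 : b / (c * a) * (x i) ^ 2 ≤ b * x i := by
      rw [div_mul_eq_mul_div, div_le_iff₀ hca]
      nlinarith [mul_nonneg (mul_nonneg hb.le h0) (sub_nonneg.2 h1)]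
    rw [hlam]; nlinarith
  have hsum : ∑ i, (-lam * (x i) ^ 2) ≤ ∑ i, (-(1 / 2) * ((x i) ^ 2 - 2 * b * x i)) :=
    Finset.sum_le_sum key
  rw [← Finset.mul_sum, ← Finset.mul_sum] at hsum
  have h2 : -lam * (N * a ^ 2) ≤ -lam * ∑ i, (x i) ^ 2 :=
    mul_le_mul_of_nonpos_left hball (by linarith)
  have heq : -lam * (N * a ^ 2) = -(1 / 2) * N * a ^ 2 + N * b * a / c := by
    rw [hlam]; field_simp; ring
  clear_value lam
  linarith
end

section
/- Let f be ρ-weakly convex on a closed convex set X and t ∈ (0, 1/ρ). Then the proximal map prox_t(x) = argmin_{y ∈ X} [f(y) + (1/(2t))||y - x||^2] is (1/(1 - tρ))-Lipschitz: ||prox_t(u) - prox_t(v)|| ≤ ||u - v||/(1 - tρ) for all u, v ∈ X. -/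
/-!
Subtracting `f + (ρ/2)‖·‖²` from the prox objective `f + (1/(2t))‖· - x‖²` leaves an affine
function, so the objective is `(1/t - ρ)`-strongly convex and grows quadratically away from its
minimizer `p x`. Adding these growth inequalities at `p u` and `p v`, the values of `f` cancel
and what remains is `(1/t - ρ) ‖p u - p v‖² ≤ (1/t) ⟪p u - p v, u - v⟫`; Cauchy–Schwarz
finishes.
-/

open Filter Topology
open scoped RealInnerProductSpace

section NormedSpace

variable {E : Type*} [NormedAddCommGroup E] [NormedSpace ℝ E]

/-- Comparing `g q` with `g` at `θ • y + (1 - θ) • q` gives `g q + (1 - θ) φ ‖y - q‖ ≤ g y`;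
let `θ → 0⁺`. -/
lemma UniformConvexOn.add_le_of_isMinOn {s : Set E} {φ : ℝ → ℝ} {g : E → ℝ} {q y : E}
    (hg : UniformConvexOn s φ g) (hq : q ∈ s) (hmin : IsMinOn g s q) (hy : y ∈ s) :
    g q + φ ‖y - q‖ ≤ g y := by
  have hθ : ∀ θ ∈ Set.Ioo (0 : ℝ) 1, g q + (1 - θ) * φ ‖y - q‖ ≤ g y := by
    rintro θ ⟨hθ0, hθ1⟩
    have hconv := hg.2 hy hq hθ0.le (sub_nonneg.2 hθ1.le) (add_sub_cancel θ 1)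
    have hle := hmin (hg.1 hy hq hθ0.le (sub_nonneg.2 hθ1.le) (add_sub_cancel θ 1))
    simp only [smul_eq_mul, Set.mem_ofPred_eq] at hconv hle
    nlinarith
  have hlim : Tendsto (fun θ : ℝ => g q + (1 - θ) * φ ‖y - q‖) (𝓝[>] 0)
      (𝓝 (g q + φ ‖y - q‖)) := tendsto_nhdsWithin_of_tendsto_nhds <|
    (by fun_prop : Continuous fun θ : ℝ => g q + (1 - θ) * φ ‖y - q‖).tendsto' 0 _ (by simp)
  exact le_of_tendsto hlim (eventually_of_mem (Ioo_mem_nhdsGT zero_lt_one) hθ)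

end NormedSpace

section InnerProductSpace

variable {E : Type*} [NormedAddCommGroup E] [InnerProductSpace ℝ E]

lemma ConvexOn.strongConvexOn_add_mul_sq_norm_sub {s : Set E} {ρ : ℝ} {f : E → ℝ}
    (hf : ConvexOn ℝ s fun y => f y + ρ / 2 * ‖y‖ ^ 2) (c : ℝ) (x : E) :
    StrongConvexOn s (2 * c - ρ) fun y => f y + c * ‖y - x‖ ^ 2 := by
  rw [strongConvexOn_iff_convex]
  have hlin : ConvexOn ℝ s fun y => -(2 * c) * ⟪x, y⟫ := (-(2 * c) • innerₗ E x).convexOn hf.1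
  refine ((hf.add hlin).add_const (c * ‖x‖ ^ 2)).congr fun y _ => ?_
  simp only [Pi.add_apply]
  rw [norm_sub_sq_real, real_inner_comm]
  ring

lemma two_mul_real_inner_sub_sub (a b u v : E) :
    2 * ⟪a - b, u - v⟫ = ‖b - u‖ ^ 2 - ‖a - u‖ ^ 2 + ‖a - v‖ ^ 2 - ‖b - v‖ ^ 2 := by
  simp only [norm_sub_sq_real, inner_sub_left, inner_sub_right]
  ring

lemma mul_sq_norm_sub_le_inner_of_isMinOn {s : Set E} {f : E → ℝ} {c m : ℝ} {u v a b : E}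
    (hu : StrongConvexOn s m fun y => f y + c * ‖y - u‖ ^ 2)
    (hv : StrongConvexOn s m fun y => f y + c * ‖y - v‖ ^ 2) (ha : a ∈ s) (hb : b ∈ s)
    (hau : IsMinOn (fun y => f y + c * ‖y - u‖ ^ 2) s a)
    (hbv : IsMinOn (fun y => f y + c * ‖y - v‖ ^ 2) s b) :
    m * ‖a - b‖ ^ 2 ≤ 2 * c * ⟪a - b, u - v⟫ := by
  have hgu := hu.add_le_of_isMinOn ha hau hb
  have hgv := hv.add_le_of_isMinOn hb hbv ha
  simp only [norm_sub_rev b a] at hgu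
  linear_combination hgu + hgv - c * two_mul_real_inner_sub_sub a b u v

end InnerProductSpace

theorem prox_lipschitz_general (n : ℕ) (ρ t : ℝ) (hρ : 0 < ρ) (ht : 0 < t) (ht1 : t < 1 / ρ)
    (X : Set (EuclideanSpace ℝ (Fin n))) (hXv : Convex ℝ X)
    (f : EuclideanSpace ℝ (Fin n) → ℝ)
    (hwc : ConvexOn ℝ Set.univ (fun x => f x + ρ / 2 * ‖x‖ ^ 2))
    (p : EuclideanSpace ℝ (Fin n) → EuclideanSpace ℝ (Fin n))
    (hpX : ∀ x, p x ∈ X)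
    (hpmin : ∀ x, IsMinOn (fun y => f y + 1 / (2 * t) * ‖y - x‖ ^ 2) X (p x))
    (u v : EuclideanSpace ℝ (Fin n)) :
    ‖p u - p v‖ ≤ ‖u - v‖ / (1 - t * ρ) := by
  have htρ : 0 < 1 - t * ρ := sub_pos.2 ((lt_div_iff₀ hρ).1 ht1)
  have hsc :=
    (hwc.subset (Set.subset_univ X) hXv).strongConvexOn_add_mul_sq_norm_sub (1 / (2 * t))
  have hmono := mul_sq_norm_sub_le_inner_of_isMinOn (hsc u) (hsc v) (hpX u) (hpX v)
    (hpmin u) (hpmin v)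
  have hkey : (1 - t * ρ) * ‖p u - p v‖ ^ 2 ≤ ‖p u - p v‖ * ‖u - v‖ :=
    calc (1 - t * ρ) * ‖p u - p v‖ ^ 2 = t * ((2 * (1 / (2 * t)) - ρ) * ‖p u - p v‖ ^ 2) := by
          field_simp
      _ ≤ t * (2 * (1 / (2 * t)) * ⟪p u - p v, u - v⟫) := by gcongr
      _ = ⟪p u - p v, u - v⟫ := by field_simp
      _ ≤ ‖p u - p v‖ * ‖u - v‖ := real_inner_le_norm _ _
  rw [le_div_iff₀ htρ]
  rcases (norm_nonneg (p u - p v)).eq_or_lt with h0 | h0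
  · rw [← h0, zero_mul]; positivity
  · nlinarith

/-- The proximal map of a ρ-weakly convex function with parameter `t < 1/ρ` is
`1/(1 - tρ)`-Lipschitz. -/
theorem prox_lipschitz (n : ℕ) (ρ t : ℝ) (hρ : 0 < ρ) (ht : 0 < t) (ht1 : t < 1 / ρ)
    (X : Set (EuclideanSpace ℝ (Fin n))) (hXc : IsClosed X) (hXv : Convex ℝ X)
    (f : EuclideanSpace ℝ (Fin n) → ℝ)
    (hwc : ConvexOn ℝ Set.univ (fun x => f x + ρ / 2 * ‖x‖ ^ 2))
    (p : EuclideanSpace ℝ (Fin n) → EuclideanSpace ℝ (Fin n))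
    (hpX : ∀ x, p x ∈ X)
    (hpmin : ∀ x, IsMinOn (fun y => f y + 1 / (2 * t) * ‖y - x‖ ^ 2) X (p x))
    (u v : EuclideanSpace ℝ (Fin n)) (hu : u ∈ X) (hv : v ∈ X) :
    ‖p u - p v‖ ≤ ‖u - v‖ / (1 - t * ρ) :=
  prox_lipschitz_general n ρ t hρ ht ht1 X hXv f hwc p hpX hpmin u v
end
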